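/- Corollary 2, Laplace baseline: Consider the linear regression model y_j = x_jᵀβ + ε_j, j = 1,…,n, with ε_j i.i.d. two-piece distributed with location 0, scale σ, baseline density the standard Laplace f(z) = (1/2) exp(−|z|), and parameterisation functions a(γ), b(γ), under the prior π(β,σ,γ) ∝ σ^{−q} π(γ) with q ≥ 0. If y does not lie in the column space of X, n > p + 1 − q, and condition (iii) holds (∫_Γ max(a(γ),b(γ))^{n+q−1}/(a(γ)+b(γ))^n π(γ) dγ < ∞), then the posterior is proper: ∫_Γ ∫_0^∞ ∫_{ℝ^p} ∏_{j=1}^n g(y_j − x_jᵀβ | σ, a(γ), b(γ); f) · σ^{−q} π(γ) dβ dσ dγ < ∞. -/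

import Mathlib

/-!
The Laplace two-piece density is dominated by `(σ (a + b))⁻¹ exp (-|z| / (σ max a b))`, so the
likelihood is at most `(σ (a + b))⁻ⁿ exp (-‖y - X β‖₁ / (σ max a b))`. Since `X` is injective and
`y` lies at positive distance from its column space, `‖y - X β‖₁ ≥ d + c ‖β‖₁` with `d, c > 0`.
The `β`-integral is then a product of one-dimensional Laplace integrals, of size
`σ ^ p exp (-d / (σ max a b))`, and the `σ`-integral is an inverse-gamma integral, finite because
`n + q - p - 1 > 0`. Collecting the powers of `max a b` leaves the integrand of condition (iii),
up to a constant.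
-/

open MeasureTheory

/-- Two-piece density with location 0, scale `σ`, baseline density `f`,
and parameterisation values `a`, `b`. -/
noncomputable def twoPiece (f : ℝ → ℝ) (σ a b : ℝ) (z : ℝ) : ℝ :=
  if z < 0 then 2 / (σ * (a + b)) * f (z / (σ * b))
  else 2 / (σ * (a + b)) * f (z / (σ * a))

/-- The standard Laplace density `f(z) = (1/2) exp(-|z|)`. -/
noncomputable def baseline (z : ℝ) : ℝ := 1 / 2 * Real.exp (-|z|)

open Real Set

lemma twoPiece_nonneg {f : ℝ → ℝ} (hf : ∀ z, 0 ≤ f z) {σ a b : ℝ} (hσ : 0 ≤ σ)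
    (hab : 0 ≤ a + b) (z : ℝ) : 0 ≤ twoPiece f σ a b z := by
  unfold twoPiece
  split_ifs <;> exact mul_nonneg (by positivity) (hf _)

lemma baseline_nonneg (z : ℝ) : 0 ≤ baseline z := by
  unfold baseline; positivity

lemma twoPiece_baseline_le {σ a b : ℝ} (hσ : 0 < σ) (ha : 0 < a) (hb : 0 < b) (z : ℝ) :
    twoPiece baseline σ a b z ≤ (σ * (a + b))⁻¹ * exp (-(|z| / (σ * max a b))) := by
  have hbranch (s : ℝ) (hs : 0 < s) (hsm : s ≤ max a b) :
      2 / (σ * (a + b)) * baseline (z / (σ * s)) ≤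
        (σ * (a + b))⁻¹ * exp (-(|z| / (σ * max a b))) := by
    rw [baseline, abs_div, abs_of_pos (by positivity : 0 < σ * s)]
    calc 2 / (σ * (a + b)) * (1 / 2 * exp (-(|z| / (σ * s))))
        = (σ * (a + b))⁻¹ * exp (-(|z| / (σ * s))) := by ring
      _ ≤ (σ * (a + b))⁻¹ * exp (-(|z| / (σ * max a b))) := by gcongr
  unfold twoPiece
  split_ifs
  · exact hbranch b hb (le_max_right a b)
  · exact hbranch a ha (le_max_left a b)

lemma prod_twoPiece_baseline_le {ι : Type*} [Fintype ι] {σ a b : ℝ} (hσ : 0 < σ) (ha : 0 < a)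
    (hb : 0 < b) (v : ι → ℝ) :
    ∏ j, twoPiece baseline σ a b (v j) ≤
      (σ * (a + b))⁻¹ ^ Fintype.card ι * exp (-((∑ j, |v j|) / (σ * max a b))) := by
  calc ∏ j, twoPiece baseline σ a b (v j)
      ≤ ∏ j, (σ * (a + b))⁻¹ * exp (-(|v j| / (σ * max a b))) :=
        Finset.prod_le_prod (fun j _ => twoPiece_nonneg baseline_nonneg hσ.le (by positivity) _)
          fun j _ => twoPiece_baseline_le hσ ha hb _
    _ = _ := by
        rw [Finset.prod_mul_distrib, Finset.prod_const, Finset.card_univ, ← exp_sum,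
          Finset.sum_div, Finset.sum_neg_distrib]

lemma integrable_exp_neg_mul_abs {k : ℝ} (hk : 0 < k) :
    Integrable fun t : ℝ => exp (-(k * |t|)) := by
  have hneg : IntegrableOn (fun t : ℝ => exp (-(k * |t|))) (Iic 0) :=
    (integrableOn_exp_mul_Iic hk 0).congr_fun
      (fun t ht => by simp [abs_of_nonpos (mem_Iic.mp ht)]) measurableSet_Iic
  have hpos : IntegrableOn (fun t : ℝ => exp (-(k * |t|))) (Ioi 0) :=
    (integrableOn_exp_mul_Ioi (neg_neg_of_pos hk) 0).congr_fun
      (fun t ht => by simp [abs_of_pos (mem_Ioi.mp ht)]) measurableSet_Ioi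
  simpa [Iic_union_Ioi] using hneg.union hpos

lemma integral_exp_neg_mul_abs {k : ℝ} (hk : 0 < k) :
    ∫ t : ℝ, exp (-(k * |t|)) = 2 / k := by
  have hIoi : ∫ t in Ioi (0 : ℝ), exp (-(k * t)) = 1 / k := by
    simp_rw [← neg_mul]
    rw [integral_exp_mul_Ioi (neg_neg_of_pos hk)]
    field_simp
    simp
  rw [integral_comp_abs (f := fun t => exp (-(k * t))), hIoi]
  ring

lemma lintegral_exp_neg_mul_sum_abs {ι : Type*} [Fintype ι] {k : ℝ} (hk : 0 < k) :
    ∫⁻ β : ι → ℝ, ENNReal.ofReal (exp (-(k * ∑ i, |β i|))) =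
      ENNReal.ofReal ((2 / k) ^ Fintype.card ι) := by
  have hprod : ∀ β : ι → ℝ, exp (-(k * ∑ i, |β i|)) = ∏ i, exp (-(k * |β i|)) := by
    intro β
    rw [← exp_sum, Finset.mul_sum, Finset.sum_neg_distrib]
  simp_rw [hprod, volume_pi]
  rw [← ofReal_integral_eq_lintegral_ofReal
      (Integrable.fintype_prod (f := fun _ t => exp (-(k * |t|)))
        fun _ => integrable_exp_neg_mul_abs hk)
      (ae_of_all _ fun β => Finset.prod_nonneg fun i _ => (exp_pos _).le),
    ← volume_pi, integral_fintype_prod_volume_eq_pow (fun t : ℝ => exp (-(k * |t|))),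
    integral_exp_neg_mul_abs hk]

lemma lintegral_rpow_mul_exp_neg_div_Ioi {r A : ℝ} (hr : r < -1) (hA : 0 < A) :
    ∫⁻ σ in Ioi 0, ENNReal.ofReal (σ ^ r * exp (-(A / σ))) =
      ENNReal.ofReal (A ^ (r + 1) * Gamma (-r - 1)) := by
  have hinv : Inv.inv '' Ioi (0 : ℝ) = Ioi 0 := by ext; simp
  -- the substitution `σ = x⁻¹` turns the integral into a Gamma integral
  have hsub := lintegral_image_eq_lintegral_abs_deriv_mul measurableSet_Ioi
    (fun x (hx : 0 < x) => (hasDerivAt_inv hx.ne').hasDerivWithinAt)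
    (inv_injective.injOn (s := Ioi (0 : ℝ)))
    (fun σ => ENNReal.ofReal (σ ^ r * exp (-(A / σ))))
  have hintegrand : ∀ x ∈ Ioi (0 : ℝ),
      ENNReal.ofReal |-(x ^ 2)⁻¹| * ENNReal.ofReal (x⁻¹ ^ r * exp (-(A / x⁻¹))) =
        ENNReal.ofReal (x ^ (-r - 2) * exp (-A * x ^ (1 : ℝ))) := by
    intro x (hx : 0 < x)
    rw [← ENNReal.ofReal_mul (abs_nonneg _), abs_neg, abs_of_pos (by positivity), inv_rpow hx.le,
      rpow_one, div_inv_eq_mul, rpow_sub hx, rpow_neg hx.le, rpow_two]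
    ring_nf
  have hint := integrableOn_rpow_mul_exp_neg_mul_rpow (s := -r - 2) (by linarith) one_pos hA
  rw [hinv] at hsub
  rw [hsub, setLIntegral_congr_fun measurableSet_Ioi hintegrand,
    ← ofReal_integral_eq_lintegral_ofReal hint (ae_restrict_of_forall_mem measurableSet_Ioi
      fun x (hx : 0 < x) => by positivity),
    integral_rpow_mul_exp_neg_mul_rpow one_pos (by linarith) hA]
  congr 1
  ring_nf

theorem LinearMap.exists_pos_add_mul_norm_le_norm_sub {E F : Type*} [NormedAddCommGroup E]
    [NormedSpace ℝ E] [FiniteDimensional ℝ E] [NormedAddCommGroup F] [NormedSpace ℝ F]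
    (T : E →ₗ[ℝ] F) (hT : Function.Injective T) {y : F} (hy : y ∉ LinearMap.range T) :
    ∃ d > 0, ∃ c > 0, ∀ x, d + c * ‖x‖ ≤ ‖y - T x‖ := by
  obtain ⟨K, hK, hanti⟩ := T.exists_antilipschitzWith (LinearMap.ker_eq_bot.mpr hT)
  have hK' : (0 : ℝ) < K := hK
  set δ := Metric.infDist y (LinearMap.range T)
  have hδ : 0 < δ := ((LinearMap.range T).closed_of_finiteDimensional.notMem_iff_infDist_pos
    ⟨0, (LinearMap.range T).zero_mem⟩).mp hy
  have hdist (x : E) : δ ≤ ‖y - T x‖ := by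
    rw [← dist_eq_norm]
    exact Metric.infDist_le_dist_of_mem (LinearMap.mem_range_self T x)
  have hgrowth (x : E) : ‖x‖ / K - ‖y‖ ≤ ‖y - T x‖ := by
    have h1 : ‖x‖ ≤ K * ‖T x‖ := ZeroHomClass.bound_of_antilipschitz T hanti x
    have h2 : ‖T x‖ - ‖y‖ ≤ ‖y - T x‖ := by
      rw [norm_sub_rev]; exact norm_sub_norm_le _ _
    have h3 : ‖x‖ / K ≤ ‖T x‖ := by
      rw [div_le_iff₀ hK']; linarith
    linarith
  -- interpolate between the two bounds with weight `t`, chosen so that the constant term is `δ / 2`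
  set t := δ / (2 * (δ + ‖y‖))
  have ht0 : 0 < t := by positivity
  have ht1 : t ≤ 1 := by
    rw [div_le_one (by positivity)]; linarith [norm_nonneg y]
  have hconst : (1 - t) * δ - t * ‖y‖ = δ / 2 := by
    simp only [t]; field_simp; ring
  refine ⟨δ / 2, by positivity, t / K, by positivity, fun x => ?_⟩
  calc δ / 2 + t / K * ‖x‖ = (1 - t) * δ + t * (‖x‖ / K - ‖y‖) := by
        linear_combination -hconst
    _ ≤ (1 - t) * ‖y - T x‖ + t * ‖y - T x‖ :=
        add_le_add (mul_le_mul_of_nonneg_left (hdist x) (by linarith))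
          (mul_le_mul_of_nonneg_left (hgrowth x) ht0.le)
    _ = ‖y - T x‖ := by ring

theorem Matrix.injective_mulVecLin_of_rank_eq_card {m n : Type*} [Fintype m] [Fintype n]
    {X : Matrix m n ℝ} (hX : X.rank = Fintype.card n) : Function.Injective X.mulVecLin := by
  have := X.mulVecLin.finrank_range_add_finrank_ker
  rw [← Matrix.rank, hX, Module.finrank_fintype_fun_eq_card, add_eq_left] at this
  exact LinearMap.ker_eq_bot.mp (Submodule.finrank_eq_zero.mp this)

lemma pi_norm_le_sum_abs {ι : Type*} [Fintype ι] (v : ι → ℝ) : ‖v‖ ≤ ∑ i, |v i| :=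
  (pi_norm_le_iff_of_nonneg (Finset.sum_nonneg fun _ _ => abs_nonneg _)).mpr fun i =>
    Finset.single_le_sum (f := fun i => |v i|) (fun _ _ => abs_nonneg _) (Finset.mem_univ i)

lemma sum_abs_le_card_mul_pi_norm {ι : Type*} [Fintype ι] (v : ι → ℝ) :
    ∑ i, |v i| ≤ Fintype.card ι * ‖v‖ := by
  simpa using Finset.sum_le_sum fun i (_ : i ∈ Finset.univ) => norm_le_pi_norm v i

theorem Matrix.exists_pos_add_mul_sum_abs_le {m n : Type*} [Fintype m] [Fintype n]
    {X : Matrix m n ℝ} (hX : X.rank = Fintype.card n) {y : m → ℝ} (hy : y ∉ Set.range X.mulVec) :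
    ∃ d > 0, ∃ c > 0, ∀ β : n → ℝ, d + c * ∑ i, |β i| ≤ ∑ j, |y j - X.mulVec β j| := by
  obtain ⟨d, hd, c, hc, hbound⟩ := X.mulVecLin.exists_pos_add_mul_norm_le_norm_sub
    (Matrix.injective_mulVecLin_of_rank_eq_card hX) (y := y) (by simpa using hy)
  refine ⟨d, hd, c / (Fintype.card n + 1), by positivity, fun β => ?_⟩
  have hcard : c / (Fintype.card n + 1) * (Fintype.card n * ‖β‖) ≤ c * ‖β‖ := by
    rw [div_mul_eq_mul_div, div_le_iff₀ (by positivity)]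
    nlinarith [norm_nonneg β]
  calc d + c / (Fintype.card n + 1) * ∑ i, |β i|
      ≤ d + c / (Fintype.card n + 1) * (Fintype.card n * ‖β‖) := by
        gcongr
        exact sum_abs_le_card_mul_pi_norm β
    _ ≤ d + c * ‖β‖ := add_le_add_right hcard d
    _ ≤ ‖y - X.mulVec β‖ := hbound β
    _ ≤ ∑ j, |y j - X.mulVec β j| := pi_norm_le_sum_abs _

noncomputable def twoPieceLikelihood {n p : ℕ} (f : ℝ → ℝ) (X : Matrix (Fin n) (Fin p) ℝ)
    (y : Fin n → ℝ) (σ a b : ℝ) (β : Fin p → ℝ) : ℝ :=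
  ∏ j, twoPiece f σ a b (y j - ∑ i, X j i * β i)

section Regression

variable {n p : ℕ} {X : Matrix (Fin n) (Fin p) ℝ} {y : Fin n → ℝ} {d c : ℝ}

lemma twoPieceLikelihood_baseline_le
    (hS : ∀ β : Fin p → ℝ, d + c * ∑ i, |β i| ≤ ∑ j, |y j - ∑ i, X j i * β i|)
    {σ a b : ℝ} (hσ : 0 < σ) (ha : 0 < a) (hb : 0 < b) (β : Fin p → ℝ) :
    twoPieceLikelihood baseline X y σ a b β ≤ (σ * (a + b))⁻¹ ^ n *
      exp (-(d / (σ * max a b))) * exp (-(c / (σ * max a b) * ∑ i, |β i|)) := by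
  calc twoPieceLikelihood baseline X y σ a b β
      ≤ (σ * (a + b))⁻¹ ^ n * exp (-((∑ j, |y j - ∑ i, X j i * β i|) / (σ * max a b))) := by
        simpa only [twoPieceLikelihood, Fintype.card_fin] using
          prod_twoPiece_baseline_le hσ ha hb fun j => y j - ∑ i, X j i * β i
    _ ≤ (σ * (a + b))⁻¹ ^ n * exp (-((d + c * ∑ i, |β i|) / (σ * max a b))) := by
        gcongr
        exact hS β
    _ = _ := by
        rw [mul_assoc, ← exp_add]
        congr 2
        ring

lemma lintegral_twoPieceLikelihood_baseline_le
    (hS : ∀ β : Fin p → ℝ, d + c * ∑ i, |β i| ≤ ∑ j, |y j - ∑ i, X j i * β i|) (hc : 0 < c)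
    {σ a b q w : ℝ} (hσ : 0 < σ) (ha : 0 < a) (hb : 0 < b) (hw : 0 ≤ w) :
    ∫⁻ β, ENNReal.ofReal (twoPieceLikelihood baseline X y σ a b β * σ ^ (-q) * w) ≤
      ENNReal.ofReal ((2 * max a b / c) ^ p / (a + b) ^ n * w *
        (σ ^ ((p : ℝ) - n - q) * exp (-(d / max a b / σ)))) := by
  set K := (σ * (a + b))⁻¹ ^ n * exp (-(d / (σ * max a b))) * σ ^ (-q) * w
  have hK : 0 ≤ K := by positivity
  have hpoint (β : Fin p → ℝ) : twoPieceLikelihood baseline X y σ a b β * σ ^ (-q) * w ≤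
      K * exp (-(c / (σ * max a b) * ∑ i, |β i|)) := by
    have := twoPieceLikelihood_baseline_le hS hσ ha hb β
    calc twoPieceLikelihood baseline X y σ a b β * σ ^ (-q) * w
        ≤ (σ * (a + b))⁻¹ ^ n * exp (-(d / (σ * max a b))) *
            exp (-(c / (σ * max a b) * ∑ i, |β i|)) * σ ^ (-q) * w := by gcongr
      _ = _ := by ring
  calc ∫⁻ β, ENNReal.ofReal (twoPieceLikelihood baseline X y σ a b β * σ ^ (-q) * w)
      ≤ ∫⁻ β : Fin p → ℝ, ENNReal.ofReal K *
          ENNReal.ofReal (exp (-(c / (σ * max a b) * ∑ i, |β i|))) :=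
        lintegral_mono fun β => by
          rw [← ENNReal.ofReal_mul hK]
          exact ENNReal.ofReal_le_ofReal (hpoint β)
    _ = ENNReal.ofReal (K * (2 / (c / (σ * max a b))) ^ p) := by
        rw [lintegral_const_mul' _ _ ENNReal.ofReal_ne_top,
          lintegral_exp_neg_mul_sum_abs (by positivity), Fintype.card_fin, ENNReal.ofReal_mul hK]
    _ = _ := by
        congr 1
        simp only [K]
        rw [rpow_sub hσ, rpow_sub hσ, rpow_neg hσ.le, rpow_natCast, rpow_natCast]
        simp only [mul_inv, mul_pow, inv_pow, div_pow]
        field_simp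

lemma lintegral_Ioi_lintegral_twoPieceLikelihood_baseline_le (hd : 0 < d) (hc : 0 < c)
    (hS : ∀ β : Fin p → ℝ, d + c * ∑ i, |β i| ≤ ∑ j, |y j - ∑ i, X j i * β i|)
    {q : ℝ} (hnp : (p : ℝ) + 1 - q < n) {a b w : ℝ} (ha : 0 < a) (hb : 0 < b) (hw : 0 ≤ w) :
    ∫⁻ σ in Ioi 0, ∫⁻ β, ENNReal.ofReal (twoPieceLikelihood baseline X y σ a b β * σ ^ (-q) * w) ≤
      ENNReal.ofReal ((2 / c) ^ p * d ^ ((p : ℝ) - n - q + 1) * Gamma (n + q - p - 1)) *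
        ENNReal.ofReal (max a b ^ ((n : ℝ) + q - 1) / (a + b) ^ n * w) := by
  have hm : 0 < max a b := lt_max_of_lt_left ha
  calc ∫⁻ σ in Ioi 0, ∫⁻ β, ENNReal.ofReal (twoPieceLikelihood baseline X y σ a b β * σ ^ (-q) * w)
      ≤ ∫⁻ σ in Ioi 0, ENNReal.ofReal ((2 * max a b / c) ^ p / (a + b) ^ n * w) *
          ENNReal.ofReal (σ ^ ((p : ℝ) - n - q) * exp (-(d / max a b / σ))) :=
        setLIntegral_mono' measurableSet_Ioi fun σ hσ =>
          (lintegral_twoPieceLikelihood_baseline_le hS hc hσ ha hb hw).trans_eq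
            (ENNReal.ofReal_mul (by positivity))
    _ = ENNReal.ofReal ((2 * max a b / c) ^ p / (a + b) ^ n * w) * ENNReal.ofReal
          ((d / max a b) ^ ((p : ℝ) - n - q + 1) * Gamma (-((p : ℝ) - n - q) - 1)) := by
        rw [lintegral_const_mul' _ _ ENNReal.ofReal_ne_top,
          lintegral_rpow_mul_exp_neg_div_Ioi (by linarith) (by positivity)]
    _ = _ := by
        have hpow :
            max a b ^ p = max a b ^ ((n : ℝ) + q - 1) * max a b ^ ((p : ℝ) - n - q + 1) := by
          rw [← rpow_natCast, ← rpow_add hm]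
          ring_nf
        have hΓ : 0 < Gamma (n + q - p - 1) := Gamma_pos_of_pos (by linarith)
        rw [show -((p : ℝ) - n - q) - 1 = n + q - p - 1 by ring,
          ← ENNReal.ofReal_mul (by positivity), ← ENNReal.ofReal_mul (by positivity),
          div_rpow hd.le hm.le, div_pow, div_pow, mul_pow, hpow]
        congr 1
        field_simp

end Regression

theorem posterior_proper_laplace_general
    (n p : ℕ) (q : ℝ)
    (X : Matrix (Fin n) (Fin p) ℝ) (hX : X.rank = p)
    (y : Fin n → ℝ)
    (Γ : Set ℝ) (hΓ : MeasurableSet Γ)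
    -- parameterisation functions
    (a b : ℝ → ℝ)
    (ha_pos : ∀ γ ∈ Γ, 0 < a γ) (hb_pos : ∀ γ ∈ Γ, 0 < b γ)
    -- proper prior density on Γ
    (πγ : ℝ → ℝ) (hπγ_nonneg : ∀ γ, 0 ≤ πγ γ)
    -- y does not lie in the column space of X
    (hy : ¬ ∃ β : Fin p → ℝ, ∀ j, y j = ∑ i, X j i * β i)
    -- n > p + 1 - q
    (hnp : (p : ℝ) + 1 - q < n)
    -- condition (iii)
    (hiii : ∫⁻ γ in Γ, ENNReal.ofReal
        (max (a γ) (b γ) ^ ((n : ℝ) + q - 1) / (a γ + b γ) ^ n * πγ γ) < ⊤) :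
    -- conclusion: the posterior of (β, σ, γ) is proper
    ∫⁻ γ in Γ, ∫⁻ σ in Set.Ioi (0 : ℝ), ∫⁻ β : Fin p → ℝ,
        ENNReal.ofReal ((∏ j, twoPiece baseline σ (a γ) (b γ) (y j - ∑ i, X j i * β i)) *
          σ ^ (-q) * πγ γ) < ⊤ := by
  obtain ⟨d, hd, c, hc, hS⟩ := Matrix.exists_pos_add_mul_sum_abs_le (X := X)
    (by rw [hX, Fintype.card_fin]) (y := y) fun ⟨β, hβ⟩ => hy ⟨β, fun j => (congrFun hβ j).symm⟩
  refine (setLIntegral_mono' hΓ fun γ hγ =>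
    lintegral_Ioi_lintegral_twoPieceLikelihood_baseline_le hd hc hS hnp (ha_pos γ hγ)
      (hb_pos γ hγ) (hπγ_nonneg γ)).trans_lt ?_
  rw [lintegral_const_mul' _ _ ENNReal.ofReal_ne_top]
  exact ENNReal.mul_lt_top ENNReal.ofReal_lt_top hiii

/-- Corollary 2 (laplace baseline): in the two-piece linear regression model with the
laplace baseline density and prior `π(β,σ,γ) ∝ σ^{-q} π(γ)`, if `y` is not in the column
space of `X`, `n > p + 1 - q`, and condition (iii) holds, then the posterior of
`(β, σ, γ)` is proper. -/
theorem posterior_proper_laplace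
    (n p : ℕ) (q : ℝ) (hq : 0 ≤ q)
    (X : Matrix (Fin n) (Fin p) ℝ) (hX : X.rank = p)
    (y : Fin n → ℝ)
    (Γ : Set ℝ) (hΓ : MeasurableSet Γ)
    -- parameterisation functions
    (a b : ℝ → ℝ) (ha_meas : Measurable a) (hb_meas : Measurable b)
    (ha_pos : ∀ γ ∈ Γ, 0 < a γ) (hb_pos : ∀ γ ∈ Γ, 0 < b γ)
    -- proper prior density on Γ
    (πγ : ℝ → ℝ) (hπγ_meas : Measurable πγ) (hπγ_nonneg : ∀ γ, 0 ≤ πγ γ)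
    (hπγ_proper : ∫⁻ γ in Γ, ENNReal.ofReal (πγ γ) = 1)
    -- y does not lie in the column space of X
    (hy : ¬ ∃ β : Fin p → ℝ, ∀ j, y j = ∑ i, X j i * β i)
    -- n > p + 1 - q
    (hnp : (p : ℝ) + 1 - q < n)
    -- condition (iii)
    (hiii : ∫⁻ γ in Γ, ENNReal.ofReal
        (max (a γ) (b γ) ^ ((n : ℝ) + q - 1) / (a γ + b γ) ^ n * πγ γ) < ⊤) :
    -- conclusion: the posterior of (β, σ, γ) is proper
    ∫⁻ γ in Γ, ∫⁻ σ in Set.Ioi (0 : ℝ), ∫⁻ β : Fin p → ℝ,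
        ENNReal.ofReal ((∏ j, twoPiece baseline σ (a γ) (b γ) (y j - ∑ i, X j i * β i)) *
          σ ^ (-q) * πγ γ) < ⊤ :=
  posterior_proper_laplace_general n p q X hX y Γ hΓ a b ha_pos hb_pos πγ hπγ_nonneg hy hnp hiii
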